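/- arXiv:1009.2387 — 4 statements merged into one kernel-verified Lean document; each statement's English description precedes it below -/
import Mathlib

section
/- Suppose λ_1,…,λ_n are distinct real numbers with λ_i + λ_j > 0 for i ≠ j, and M(t) is a smooth curve in so(n) satisfying the free rigid body equation Ṁ = [M, Ω], where Ω is the unique skew-symmetric matrix with m_{ij} = (λ_i + λ_j) ω_{ij}. Then for each i, the function t ↦ F_i(M(t)) = ∑_{k≠i} m_{ik}(t)^2/(λ_i^2 − λ_k^2) is constant. -/
/-!
Writing `M = ΩJ + JΩ`, the rigid body equation becomes `Ṁ = [J, Ω²]`, i.e.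
`ṁᵢₖ = (λᵢ - λₖ) (Ω²)ᵢₖ`. Hence `d/dt (mᵢₖ² / (λᵢ² - λₖ²)) = 2 ωᵢₖ (Ω²)ᵢₖ`, and summing over `k`
gives `2 (Ω³)ᵢᵢ` (because `Ω²` is symmetric), which vanishes since `Ω³` is skew-symmetric.
-/

open Matrix

namespace Matrix

variable {ι R K : Type*}

theorem diag_eq_zero_of_transpose_eq_neg [Ring R] [NoZeroDivisors R] [CharZero R]
    {A : Matrix ι ι R} (hA : Aᵀ = -A) (i : ι) : A i i = 0 :=
  self_eq_neg.mp (congrFun (congrFun hA i) i)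

theorem transpose_of_div_add_eq_neg [Field K] {M : Matrix ι ι K} (hM : Mᵀ = -M) (d : ι → K) :
    (of fun i j => M i j / (d i + d j))ᵀ = -of fun i j => M i j / (d i + d j) := by
  ext i j
  have hji : M j i = -M i j := congrFun (congrFun hM i) j
  simp [hji, add_comm (d j), neg_div]

variable [Fintype ι]

theorem sum_mul_mul_self_apply_eq_zero [CommRing R] [NoZeroDivisors R] [CharZero R]
    {A : Matrix ι ι R} (hA : Aᵀ = -A) (i : ι) : ∑ k, A i k * (A * A) i k = 0 := by
  have hsq : (A * A)ᵀ = A * A := by simp only [transpose_mul, hA, neg_mul_neg]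
  have hcube : (A * (A * A))ᵀ = -(A * (A * A)) := by
    rw [transpose_mul, hsq, hA, mul_neg, Matrix.mul_assoc]
  calc ∑ k, A i k * (A * A) i k = (A * (A * A)ᵀ) i i := by rw [mul_apply]; rfl
    _ = 0 := by rw [hsq]; exact diag_eq_zero_of_transpose_eq_neg hcube i

variable [DecidableEq ι]

theorem diagonal_mul_sub_mul_diagonal_apply [CommRing R] (d : ι → R) (A : Matrix ι ι R)
    (i k : ι) : (diagonal d * A - A * diagonal d) i k = (d i - d k) * A i k := by
  simp only [sub_apply, diagonal_mul, mul_diagonal]; ring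

theorem mul_sub_mul_apply_of_eq_mul_diagonal_add_diagonal_mul [CommRing R] {M Ω : Matrix ι ι R}
    {d : ι → R} (hM : M = Ω * diagonal d + diagonal d * Ω) (i k : ι) :
    (M * Ω - Ω * M) i k = (d i - d k) * (Ω * Ω) i k := by
  have hlie : M * Ω - Ω * M = diagonal d * (Ω * Ω) - (Ω * Ω) * diagonal d := by
    rw [hM]; noncomm_ring
  rw [hlie, diagonal_mul_sub_mul_diagonal_apply]

theorem eq_of_div_add_mul_diagonal_add_diagonal_mul [Field K] [CharZero K] {M : Matrix ι ι K}
    (hM : Mᵀ = -M) {d : ι → K} (hd : ∀ i j, i ≠ j → d i + d j ≠ 0) :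
    M = (of fun i j => M i j / (d i + d j)) * diagonal d
      + diagonal d * of fun i j => M i j / (d i + d j) := by
  ext i j
  simp only [add_apply, mul_diagonal, diagonal_mul, of_apply]
  rcases eq_or_ne i j with rfl | hij
  · simp [diag_eq_zero_of_transpose_eq_neg hM]
  · field_simp [hd i j hij]
    ring

end Matrix

theorem hasDerivAt_apply_sq_div_of_rigidBody {ι : Type*} [Fintype ι] [DecidableEq ι]
    {M Ω : ℝ → Matrix ι ι ℝ} {d : ι → ℝ} {u : ℝ} {i k : ι}
    (hM : M u = Ω u * diagonal d + diagonal d * Ω u)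
    (hderiv : HasDerivAt (fun s => M s i k) ((M u * Ω u - Ω u * M u) i k) u)
    (hsub : d i ≠ d k) (hadd : d i + d k ≠ 0) :
    HasDerivAt (fun s => M s i k ^ 2 / (d i ^ 2 - d k ^ 2))
      (2 * (Ω u i k * (Ω u * Ω u) i k)) u := by
  have hsq : d i ^ 2 - d k ^ 2 ≠ 0 := by
    rw [sq_sub_sq]; exact mul_ne_zero hadd (sub_ne_zero.mpr hsub)
  have hMik : M u i k = (d i + d k) * Ω u i k := by
    rw [hM, Matrix.add_apply, mul_diagonal, diagonal_mul]; ring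
  refine ((hderiv.pow 2).div_const (d i ^ 2 - d k ^ 2)).congr_deriv ?_
  rw [mul_sub_mul_apply_of_eq_mul_diagonal_add_diagonal_mul hM, hMik]
  field_simp
  ring

/-- Along any smooth solution of the free rigid body equation `Ṁ = [M, Ω]` on `so(n)`,
where `mᵢⱼ = (λᵢ + λⱼ) ωᵢⱼ`, each function `Fᵢ(M) = ∑_{k ≠ i} mᵢₖ²/(λᵢ² − λₖ²)` is constant. -/
theorem stmt1 (n : ℕ) (lam : Fin n → ℝ) (hdist : Function.Injective lam)
    (hpos : ∀ i j : Fin n, i ≠ j → 0 < lam i + lam j)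
    (M : ℝ → Matrix (Fin n) (Fin n) ℝ)
    (hskew : ∀ t, (M t)ᵀ = -(M t))
    (Ω : ℝ → Matrix (Fin n) (Fin n) ℝ)
    (hΩ : ∀ t, Ω t = Matrix.of fun i j => M t i j / (lam i + lam j))
    (hderiv : ∀ t, ∀ i j : Fin n,
      HasDerivAt (fun s => M s i j) ((M t * Ω t - Ω t * M t) i j) t) :
    ∀ i : Fin n, ∀ t t' : ℝ,
      (∑ k ∈ Finset.univ.filter (fun k => k ≠ i), M t i k ^ 2 / (lam i ^ 2 - lam k ^ 2))
        = ∑ k ∈ Finset.univ.filter (fun k => k ≠ i), M t' i k ^ 2 / (lam i ^ 2 - lam k ^ 2) := by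
  intro i
  have hΩskew : ∀ u, (Ω u)ᵀ = -Ω u := fun u => hΩ u ▸ transpose_of_div_add_eq_neg (hskew u) lam
  have hM : ∀ u, M u = Ω u * diagonal lam + diagonal lam * Ω u := fun u =>
    hΩ u ▸ eq_of_div_add_mul_diagonal_add_diagonal_mul (hskew u)
      fun j k hjk => (hpos j k hjk).ne'
  have hterm : ∀ u, ∀ k ∈ Finset.univ.filter (fun k => k ≠ i), HasDerivAt
      (fun s => M s i k ^ 2 / (lam i ^ 2 - lam k ^ 2)) (2 * (Ω u i k * (Ω u * Ω u) i k)) u :=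
    fun u k hk =>
      have hki : k ≠ i := (Finset.mem_filter.mp hk).2
      hasDerivAt_apply_sq_div_of_rigidBody (hM u) (hderiv u i k) (hdist.ne hki.symm)
        (hpos i k hki.symm).ne'
  intro t t'
  refine is_const_of_deriv_eq_zero (fun u => (HasDerivAt.fun_sum (hterm u)).differentiableAt)
    (fun u => ?_) t t'
  rw [(HasDerivAt.fun_sum (hterm u)).deriv, ← Finset.mul_sum, Finset.sum_filter_of_ne,
    sum_mul_mul_self_apply_eq_zero (hΩskew u), mul_zero]
  rintro k - hk rfl
  simp [diag_eq_zero_of_transpose_eq_neg (hΩskew u)] at hk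
end

section
/- Suppose λ_1,…,λ_n are distinct real numbers with λ_i + λ_j > 0 for i ≠ j, and M(t) is a smooth solution of Ṁ = [M, Ω] with M = ΩJ + JΩ, J = diag(λ_i). Then for every positive integer r, the Mishchenko function m_r(M(t)) = ∑_{i<k} ((λ_i^r − λ_k^r)/(λ_i^2 − λ_k^2)) m_{ik}(t)^2 is constant in t. -/
open Matrix

/-! Put `c i k = (f λᵢ - f λₖ) / (λᵢ² - λₖ²)`. Along the flow, `∑ᵢₖ c i k mᵢₖ²` has derivative
`2 ∑ᵢⱼₖ c i k ((λⱼ + λₖ)⁻¹ - (λᵢ + λⱼ)⁻¹) mᵢⱼ mⱼₖ mᵢₖ`. By skew-symmetry the product `mᵢⱼ mⱼₖ mᵢₖ`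
is invariant under cyclic permutations of `(i, j, k)`, and each weight equals
`(f λᵢ - f λₖ) / ((λᵢ + λⱼ)(λⱼ + λₖ)(λₖ + λᵢ))`, so the three cyclically permuted weights
telescope to zero. Hence that sum over all ordered pairs, twice the Mishchenko function, is
constant, for any `f` and not only for `f = (· ^ r)`. -/

noncomputable def mishchenkoCoeff (f : ℝ → ℝ) (x y : ℝ) : ℝ := (f x - f y) / (x ^ 2 - y ^ 2)

lemma mishchenkoCoeff_comm (f : ℝ → ℝ) (x y : ℝ) :
    mishchenkoCoeff f x y = mishchenkoCoeff f y x := by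
  rw [mishchenkoCoeff, mishchenkoCoeff, ← neg_div_neg_eq, neg_sub, neg_sub]

lemma mishchenkoCoeff_self (f : ℝ → ℝ) (x : ℝ) : mishchenkoCoeff f x x = 0 := by
  simp [mishchenkoCoeff]

lemma mishchenkoCoeff_mul_inv_sub_inv (f : ℝ → ℝ) {x y z : ℝ} (hxz : x ≠ z)
    (hxy : x + y ≠ 0) (hyz : y + z ≠ 0) (hzx : z + x ≠ 0) :
    mishchenkoCoeff f x z * ((y + z)⁻¹ - (x + y)⁻¹)
      = (f x - f z) / ((x + y) * (y + z) * (z + x)) := by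
  have hsq : x ^ 2 - z ^ 2 = (x - z) * (z + x) := by ring
  rw [mishchenkoCoeff, hsq]
  field_simp [sub_ne_zero.mpr hxz]
  ring

lemma mishchenkoCoeff_cyclic_sum (f : ℝ → ℝ) {x y z : ℝ}
    (hxy : x ≠ y) (hyz : y ≠ z) (hzx : z ≠ x)
    (sxy : x + y ≠ 0) (syz : y + z ≠ 0) (szx : z + x ≠ 0) :
    mishchenkoCoeff f x z * ((y + z)⁻¹ - (x + y)⁻¹)
      + mishchenkoCoeff f y x * ((z + x)⁻¹ - (y + z)⁻¹)
      + mishchenkoCoeff f z y * ((x + y)⁻¹ - (z + x)⁻¹) = 0 := by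
  rw [mishchenkoCoeff_mul_inv_sub_inv f hzx.symm sxy syz szx,
    mishchenkoCoeff_mul_inv_sub_inv f hxy.symm syz szx sxy,
    mishchenkoCoeff_mul_inv_sub_inv f hyz.symm szx sxy syz]
  ring

section Sums

variable {ι : Type*} [Fintype ι]

lemma sum_sum_sum_eq_zero_of_cyclic {K : Type*} [Field K] [CharZero K] (T : ι → ι → ι → K)
    (hT : ∀ i j k, T i j k + T j k i + T k i j = 0) :
    ∑ i, ∑ j, ∑ k, T i j k = 0 := by
  have h₁ : ∑ i, ∑ j, ∑ k, T j k i = ∑ i, ∑ j, ∑ k, T i j k := by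
    rw [Finset.sum_comm]; exact Finset.sum_congr rfl fun _ _ => Finset.sum_comm
  have h₂ : ∑ i, ∑ j, ∑ k, T k i j = ∑ i, ∑ j, ∑ k, T i j k := by
    rw [Finset.sum_congr rfl fun _ _ => Finset.sum_comm, Finset.sum_comm]
  have h₃ : (3 : K) * ∑ i, ∑ j, ∑ k, T i j k = 0 := by
    calc (3 : K) * ∑ i, ∑ j, ∑ k, T i j k
        = ∑ i, ∑ j, ∑ k, T i j k + ∑ i, ∑ j, ∑ k, T j k i + ∑ i, ∑ j, ∑ k, T k i j := by
          rw [h₁, h₂]; ring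
      _ = 0 := by simp only [← Finset.sum_add_distrib, hT, Finset.sum_const_zero]
  simpa using h₃

lemma two_mul_sum_sum_ite_lt [LinearOrder ι] {R : Type*} [CommSemiring R] (g : ι → ι → R)
    (hg : ∀ i k, g i k = g k i) (hdiag : ∀ i, g i i = 0) :
    2 * ∑ i, ∑ k, (if i < k then g i k else 0) = ∑ i, ∑ k, g i k := by
  have hsplit : ∀ i k, g i k = (if i < k then g i k else 0) + (if k < i then g k i else 0) := by
    intro i k
    rcases lt_trichotomy i k with h | rfl | h
    · simp [h, h.not_gt]
    · simp [hdiag]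
    · simp [h, h.not_gt, hg i k]
  simp_rw [Finset.sum_congr rfl fun i _ => Finset.sum_congr rfl fun k _ => hsplit i k,
    Finset.sum_add_distrib]
  rw [Finset.sum_comm (f := fun i k => if k < i then g k i else 0)]
  ring

lemma hasDerivAt_sum_sum_mul_sq (c : ι → ι → ℝ) {m : ℝ → Matrix ι ι ℝ} {m' : Matrix ι ι ℝ}
    {t : ℝ} (h : ∀ i k, HasDerivAt (fun s => m s i k) (m' i k) t) :
    HasDerivAt (fun s => ∑ i, ∑ k, c i k * m s i k ^ 2)
      (2 * ∑ i, ∑ k, c i k * (m t i k * m' i k)) t := by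
  have : HasDerivAt (fun s => ∑ i, ∑ k, c i k * m s i k ^ 2)
      (∑ i, ∑ k, c i k * (((2 : ℕ) : ℝ) * m t i k ^ (2 - 1) * m' i k)) t :=
    HasDerivAt.fun_sum fun i _ => HasDerivAt.fun_sum fun k _ =>
      ((h i k).fun_pow 2).const_mul (c i k)
  convert this using 1
  simp only [Finset.mul_sum]
  refine Finset.sum_congr rfl fun i _ => Finset.sum_congr rfl fun k _ => ?_
  push_cast
  ring

end Sums

section RigidBody

variable {ι : Type*} [Fintype ι]

noncomputable def angularVelocity (lam : ι → ℝ) (A : Matrix ι ι ℝ) : Matrix ι ι ℝ :=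
  of fun i j => A i j / (lam i + lam j)

lemma commutator_angularVelocity_apply (lam : ι → ℝ) (A : Matrix ι ι ℝ) (i k : ι) :
    (A * angularVelocity lam A - angularVelocity lam A * A) i k
      = ∑ j, ((lam j + lam k)⁻¹ - (lam i + lam j)⁻¹) * (A i j * A j k) := by
  simp only [angularVelocity, Matrix.sub_apply, mul_apply, of_apply, ← Finset.sum_sub_distrib]
  exact Finset.sum_congr rfl fun j _ => by ring

theorem sum_mishchenkoCoeff_mul_commutator_eq_zero (f : ℝ → ℝ) {lam : ι → ℝ}
    (hdist : Function.Injective lam) (hsum : ∀ i j, i ≠ j → lam i + lam j ≠ 0)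
    {A : Matrix ι ι ℝ} (hA : ∀ i j, A j i = -A i j) :
    ∑ i, ∑ k, mishchenkoCoeff f (lam i) (lam k) *
      (A i k * (A * angularVelocity lam A - angularVelocity lam A * A) i k) = 0 := by
  set w : ι → ι → ι → ℝ := fun i j k =>
    mishchenkoCoeff f (lam i) (lam k) * ((lam j + lam k)⁻¹ - (lam i + lam j)⁻¹)
  have hdiag : ∀ i, A i i = 0 := fun i => by linarith [hA i i]
  calc _ = ∑ i, ∑ j, ∑ k, w i j k * (A i j * A j k * A i k) := by
        simp only [commutator_angularVelocity_apply, Finset.mul_sum]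
        refine Finset.sum_congr rfl fun i _ => Finset.sum_comm.trans ?_
        exact Finset.sum_congr rfl fun j _ => Finset.sum_congr rfl fun k _ => by ring
    _ = 0 := by
      refine sum_sum_sum_eq_zero_of_cyclic _ fun i j k => ?_
      by_cases hijk : i = j ∨ j = k ∨ k = i
      · rcases hijk with rfl | rfl | rfl <;> simp [hdiag]
      obtain ⟨hij, hjk, hki⟩ : i ≠ j ∧ j ≠ k ∧ k ≠ i := by tauto
      rw [hA i k, hA i j, hA j k]
      linear_combination (A i j * A j k * A i k) * mishchenkoCoeff_cyclic_sum f
        (hdist.ne hij) (hdist.ne hjk) (hdist.ne hki) (hsum i j hij) (hsum j k hjk) (hsum k i hki)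

end RigidBody

theorem stmt2_general (n : ℕ) (lam : Fin n → ℝ) (hdist : Function.Injective lam)
    (hpos : ∀ i j : Fin n, i ≠ j → 0 < lam i + lam j)
    (M : ℝ → Matrix (Fin n) (Fin n) ℝ)
    (hskew : ∀ t, (M t)ᵀ = -(M t))
    (Ω : ℝ → Matrix (Fin n) (Fin n) ℝ)
    (hΩ : ∀ t, Ω t = Matrix.of fun i j => M t i j / (lam i + lam j))
    (hderiv : ∀ t, ∀ i j : Fin n,
      HasDerivAt (fun s => M s i j) ((M t * Ω t - Ω t * M t) i j) t)
    (r : ℕ) :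
    ∀ t t' : ℝ,
      (∑ i : Fin n, ∑ k : Fin n,
        if i < k then ((lam i ^ r - lam k ^ r) / (lam i ^ 2 - lam k ^ 2)) * M t i k ^ 2 else 0)
      = ∑ i : Fin n, ∑ k : Fin n,
        if i < k then ((lam i ^ r - lam k ^ r) / (lam i ^ 2 - lam k ^ 2)) * M t' i k ^ 2 else 0 := by
  have hM : ∀ t i j, M t j i = -M t i j := fun t i j => by
    simpa using congrFun (congrFun (hskew t) i) j
  have hsum : ∀ i j, i ≠ j → lam i + lam j ≠ 0 := fun i j h => (hpos i j h).ne'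
  set c : Fin n → Fin n → ℝ := fun i k => mishchenkoCoeff (· ^ r) (lam i) (lam k)
  have hconst : ∀ t, HasDerivAt (fun s => ∑ i, ∑ k, c i k * M s i k ^ 2) 0 t := fun t => by
    have h := hasDerivAt_sum_sum_mul_sq c (hderiv t)
    rwa [hΩ t, ← angularVelocity, sum_mishchenkoCoeff_mul_commutator_eq_zero _ hdist hsum (hM t),
      mul_zero] at h
  have hhalf : ∀ t, 2 * (∑ i, ∑ k, if i < k then c i k * M t i k ^ 2 else 0)
      = ∑ i, ∑ k, c i k * M t i k ^ 2 := fun t =>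
    two_mul_sum_sum_ite_lt _
      (fun i k => by simp only [c, mishchenkoCoeff_comm _ (lam i), hM t i k, neg_sq])
      (fun i => by simp [c, mishchenkoCoeff_self])
  intro t t'
  have hG : ∑ i, ∑ k, c i k * M t i k ^ 2 = ∑ i, ∑ k, c i k * M t' i k ^ 2 :=
    is_const_of_deriv_eq_zero (fun s => (hconst s).differentiableAt)
      (fun s => (hconst s).deriv) t t'
  exact mul_left_cancel₀ two_ne_zero ((hhalf t).trans (hG.trans (hhalf t').symm))

/-- Along any smooth solution of the free rigid body equation `Ṁ = [M, Ω]` on `so(n)`,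
each Mishchenko function `m_r(M) = ∑_{i<k} ((λᵢ^r − λₖ^r)/(λᵢ² − λₖ²)) mᵢₖ²` is constant. -/
theorem stmt2 (n : ℕ) (lam : Fin n → ℝ) (hdist : Function.Injective lam)
    (hpos : ∀ i j : Fin n, i ≠ j → 0 < lam i + lam j)
    (M : ℝ → Matrix (Fin n) (Fin n) ℝ)
    (hskew : ∀ t, (M t)ᵀ = -(M t))
    (Ω : ℝ → Matrix (Fin n) (Fin n) ℝ)
    (hΩ : ∀ t, Ω t = Matrix.of fun i j => M t i j / (lam i + lam j))
    (hderiv : ∀ t, ∀ i j : Fin n,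
      HasDerivAt (fun s => M s i j) ((M t * Ω t - Ω t * M t) i j) t)
    (r : ℕ) (hr : 0 < r) :
    ∀ t t' : ℝ,
      (∑ i : Fin n, ∑ k : Fin n,
        if i < k then ((lam i ^ r - lam k ^ r) / (lam i ^ 2 - lam k ^ 2)) * M t i k ^ 2 else 0)
      = ∑ i : Fin n, ∑ k : Fin n,
        if i < k then ((lam i ^ r - lam k ^ r) / (lam i ^ 2 - lam k ^ 2)) * M t' i k ^ 2 else 0 :=
  stmt2_general n lam hdist hpos M hskew Ω hΩ hderiv r
end

section
/- For a smooth solution M(t) of the free rigid body equation Ṁ = [M,Ω] on so(n), the function K_1(M) = −(1/4)Trace(∑_{p=0}^{3} J^p M J^{3−p} Ω) is constant in t. -/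
/-!
Write `L X = ∑_{p=0}^{3} Jᵖ X J^{3-p}` and let `Ω̇` be the matrix with `Ṁ = Ω̇J + JΩ̇`, which exists
because `Ṁ` has zero diagonal. `L` is self-adjoint for the trace pairing and commutes with
`X ↦ XJ + JX`, so `d/dt tr(L(M) Ω) = tr(L(Ṁ) Ω) + tr(L(M) Ω̇) = 2 tr(L(Ṁ) Ω)`. Since `M = ΩJ + JΩ`,
the equation of motion reads `Ṁ = [J, Ω²]`; `L` telescopes this to `[J⁴, Ω²]`, whose trace against
`Ω` vanishes by cyclicity.
-/

open Matrix Finset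

namespace Matrix

section Algebra

variable {m R : Type*} [Fintype m] [DecidableEq m] [CommRing R]

def sandwichSum (J : Matrix m m R) (k : ℕ) (X : Matrix m m R) : Matrix m m R :=
  ∑ p ∈ range (k + 1), J ^ p * X * J ^ (k - p)

theorem sandwichSum_commutator (J X : Matrix m m R) (k : ℕ) :
    sandwichSum J k (J * X - X * J) = J ^ (k + 1) * X - X * J ^ (k + 1) := by
  have hterm : ∀ p ∈ range (k + 1), J ^ p * (J * X - X * J) * J ^ (k - p)
      = J ^ (p + 1) * X * J ^ (k + 1 - (p + 1)) - J ^ p * X * J ^ (k + 1 - p) := by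
    intro p hp
    have hpk : k + 1 - p = k - p + 1 := by rw [mem_range] at hp; omega
    rw [Nat.add_sub_add_right, hpk, pow_succ J p, pow_succ' J (k - p)]
    noncomm_ring
  rw [sandwichSum, sum_congr rfl hterm,
    sum_range_sub (fun p => J ^ p * X * J ^ (k + 1 - p))]
  simp

theorem sandwichSum_anticommutator (J X : Matrix m m R) (k : ℕ) :
    sandwichSum J k (X * J + J * X) = sandwichSum J k X * J + J * sandwichSum J k X := by
  simp only [sandwichSum, sum_mul, mul_sum, ← sum_add_distrib]
  refine sum_congr rfl fun p _ => ?_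
  simp only [mul_add, add_mul, mul_assoc]
  rw [(Commute.self_pow J p).left_comm, pow_mul_comm']

theorem trace_sandwichSum_mul (J X Y : Matrix m m R) (k : ℕ) :
    trace (sandwichSum J k X * Y) = trace (X * sandwichSum J k Y) := by
  simp only [sandwichSum, sum_mul, mul_sum, trace_sum]
  rw [← sum_range_reflect]
  refine sum_congr rfl fun p hp => ?_
  rw [Nat.add_sub_cancel, Nat.sub_sub_self (by rw [mem_range] at hp; omega), mul_assoc, mul_assoc,
    trace_mul_comm]
  simp only [mul_assoc]

theorem trace_sandwichSum_deriv_eq_zero {J M Ω M' Ω' : Matrix m m R} (k : ℕ)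
    (hM : M = Ω * J + J * Ω) (hM' : M' = Ω' * J + J * Ω')
    (hflow : M' = J * (Ω * Ω) - Ω * Ω * J) :
    trace (sandwichSum J k M' * Ω + sandwichSum J k M * Ω') = 0 := by
  have hswap : trace (sandwichSum J k M * Ω') = trace (sandwichSum J k M' * Ω) := by
    calc trace (sandwichSum J k M * Ω')
        = trace (Ω * J * sandwichSum J k Ω' + J * Ω * sandwichSum J k Ω') := by
          rw [trace_sandwichSum_mul, hM, add_mul]
      _ = trace (Ω * (sandwichSum J k Ω' * J + J * sandwichSum J k Ω')) := by
          rw [trace_add, mul_add, trace_add, ← mul_assoc, ← mul_assoc,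
            trace_mul_cycle Ω (sandwichSum J k Ω') J, add_comm]
      _ = trace (sandwichSum J k M' * Ω) := by
          rw [← sandwichSum_anticommutator, ← hM', trace_mul_comm]
  rw [trace_add, hswap, ← two_mul, hflow, sandwichSum_commutator, sub_mul, trace_sub,
    mul_assoc (Ω * Ω), trace_mul_comm (Ω * Ω)]
  simp only [mul_assoc, sub_self, mul_zero]

end Algebra

theorem eq_mul_diagonal_add_diagonal_mul {m K : Type*} [Fintype m] [DecidableEq m] [Field K]
    {lam : m → K} (hlam : ∀ i j, i ≠ j → lam i + lam j ≠ 0) {X : Matrix m m K}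
    (hX : ∀ i, X i i = 0) :
    X = (of fun i j => X i j / (lam i + lam j)) * diagonal lam
      + diagonal lam * of fun i j => X i j / (lam i + lam j) := by
  ext i j
  simp only [add_apply, mul_diagonal, diagonal_mul, of_apply]
  rcases eq_or_ne i j with rfl | hij
  · simp [hX]
  · field_simp [hlam i j hij]
    ring

section Deriv

variable {m : Type*} [Fintype m] {A B : ℝ → Matrix m m ℝ} {A' B' : Matrix m m ℝ} {t : ℝ}

theorem hasDerivAt_trace_mul (hA : ∀ i j, HasDerivAt (fun s => A s i j) (A' i j) t)
    (hB : ∀ i j, HasDerivAt (fun s => B s i j) (B' i j) t) :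
    HasDerivAt (fun s => trace (A s * B s)) (trace (A' * B t + A t * B')) t := by
  have htrace : ∀ X Y : Matrix m m ℝ, trace (X * Y) = ∑ i, ∑ j, X i j * Y j i := fun X Y => by
    simp only [trace, diag_apply, mul_apply]
  simp only [trace_add, htrace, ← sum_add_distrib]
  exact HasDerivAt.fun_sum fun i _ => HasDerivAt.fun_sum fun j _ => (hA i j).mul (hB j i)

theorem hasDerivAt_mul_mul_apply (P Q : Matrix m m ℝ)
    (hA : ∀ i j, HasDerivAt (fun s => A s i j) (A' i j) t) (i j : m) :
    HasDerivAt (fun s => (P * A s * Q) i j) ((P * A' * Q) i j) t := by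
  simp only [mul_apply]
  exact HasDerivAt.fun_sum fun k _ =>
    (HasDerivAt.fun_sum fun l _ => (hA l k).const_mul (P i l)).mul_const (Q k j)

theorem hasDerivAt_sandwichSum_apply [DecidableEq m] (J : Matrix m m ℝ) (k : ℕ)
    (hA : ∀ i j, HasDerivAt (fun s => A s i j) (A' i j) t) (i j : m) :
    HasDerivAt (fun s => sandwichSum J k (A s) i j) (sandwichSum J k A' i j) t := by
  simp only [sandwichSum, sum_apply]
  exact HasDerivAt.fun_sum fun p _ => hasDerivAt_mul_mul_apply _ _ hA i j

end Deriv

end Matrix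

theorem stmt5_general (n : ℕ) (lam : Fin n → ℝ)
    (hpos : ∀ i j : Fin n, i ≠ j → 0 < lam i + lam j)
    (J : Matrix (Fin n) (Fin n) ℝ) (hJ : J = Matrix.diagonal lam)
    (M : ℝ → Matrix (Fin n) (Fin n) ℝ)
    (hskew : ∀ t, (M t)ᵀ = -(M t))
    (Ω : ℝ → Matrix (Fin n) (Fin n) ℝ)
    (hΩ : ∀ t, Ω t = Matrix.of fun i j => M t i j / (lam i + lam j))
    (hderiv : ∀ t, ∀ i j : Fin n,
      HasDerivAt (fun s => M s i j) ((M t * Ω t - Ω t * M t) i j) t) :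
    ∀ t t' : ℝ,
      -(1/4 : ℝ) * Matrix.trace (∑ p ∈ Finset.range 4, J ^ p * M t * J ^ (3 - p) * Ω t)
        = -(1/4 : ℝ) * Matrix.trace (∑ p ∈ Finset.range 4, J ^ p * M t' * J ^ (3 - p) * Ω t') := by
  subst hJ
  have hlam : ∀ i j, i ≠ j → lam i + lam j ≠ 0 := fun i j hij => (hpos i j hij).ne'
  have hK : ∀ t, HasDerivAt (fun s => trace (sandwichSum (diagonal lam) 3 (M s) * Ω s)) 0 t := by
    intro t
    set Mdot := M t * Ω t - Ω t * M t
    have hM : M t = Ω t * diagonal lam + diagonal lam * Ω t := by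
      rw [hΩ t]
      refine eq_mul_diagonal_add_diagonal_mul hlam fun i => ?_
      have hii := congrFun₂ (hskew t) i i
      rw [transpose_apply, neg_apply] at hii
      linarith
    have hflow : Mdot = diagonal lam * (Ω t * Ω t) - Ω t * Ω t * diagonal lam := by
      simp only [Mdot]
      rw [hM]
      noncomm_ring
    set Ωdot : Matrix (Fin n) (Fin n) ℝ := of fun i j => Mdot i j / (lam i + lam j)
    have hMdot : Mdot = Ωdot * diagonal lam + diagonal lam * Ωdot :=
      eq_mul_diagonal_add_diagonal_mul hlam fun i => by
        simp [hflow, diagonal_mul, mul_diagonal, mul_comm]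
    have hΩdot : ∀ i j, HasDerivAt (fun s => Ω s i j) (Ωdot i j) t := by
      intro i j
      simp only [hΩ, Ωdot, of_apply]
      exact (hderiv t i j).div_const _
    have h := hasDerivAt_trace_mul (hasDerivAt_sandwichSum_apply (diagonal lam) 3 (hderiv t)) hΩdot
    rwa [trace_sandwichSum_deriv_eq_zero 3 hM hMdot hflow] at h
  intro t t'
  simp only [← sum_mul]
  exact congrArg _
    (is_const_of_deriv_eq_zero (fun x => (hK x).differentiableAt) (fun x => (hK x).deriv) t t')

/-- Along any smooth solution of the free rigid body equation `Ṁ = [M, Ω]` on `so(n)`,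
`K₁(M) = −(1/4)Trace(∑_{p=0}^{3} Jᵖ M J^{3−p} Ω)` is constant. -/
theorem stmt5 (n : ℕ) (lam : Fin n → ℝ) (hdist : Function.Injective lam)
    (hpos : ∀ i j : Fin n, i ≠ j → 0 < lam i + lam j)
    (J : Matrix (Fin n) (Fin n) ℝ) (hJ : J = Matrix.diagonal lam)
    (M : ℝ → Matrix (Fin n) (Fin n) ℝ)
    (hskew : ∀ t, (M t)ᵀ = -(M t))
    (Ω : ℝ → Matrix (Fin n) (Fin n) ℝ)
    (hΩ : ∀ t, Ω t = Matrix.of fun i j => M t i j / (lam i + lam j))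
    (hderiv : ∀ t, ∀ i j : Fin n,
      HasDerivAt (fun s => M s i j) ((M t * Ω t - Ω t * M t) i j) t) :
    ∀ t t' : ℝ,
      -(1/4 : ℝ) * Matrix.trace (∑ p ∈ Finset.range 4, J ^ p * M t * J ^ (3 - p) * Ω t)
        = -(1/4 : ℝ) * Matrix.trace (∑ p ∈ Finset.range 4, J ^ p * M t' * J ^ (3 - p) * Ω t') :=
  stmt5_general n lam hpos J hJ M hskew Ω hΩ hderiv
end

section
/- The matrix M(a,b) ∈ so(5) with nonzero entries M₁₂ = a = −M₂₁ and M₃₄ = b = −M₄₃ is an equilibrium of the so(5) free rigid body: [M(a,b), Ω] = 0, where Ω is determined by M = ΩJ + JΩ with J = diag(λ_1,…,λ_5), λ_i + λ_j > 0 for i ≠ j. -/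
/-!
`M(a,b) = a X + b Y` with `X = E₁₂ - E₂₁` and `Y = E₃₄ - E₄₃`, two generators of `so(5)` acting on
disjoint coordinate planes, so `X Y = 0 = Y X`. The map `M ↦ Ω` is linear and sends each generator
`E_ij - E_ji` to a multiple of itself, hence `Ω = α X + β Y` lies in the commutative span of
`X, Y` and commutes with `M`.
-/

open Matrix

namespace Matrix

section skewSingle

variable {n R : Type*} [DecidableEq n] [Ring R]

def skewSingle (i j : n) : Matrix n n R := single i j 1 - single j i 1

theorem skewSingle_mul_skewSingle_of_disjoint [Fintype n] {i j k l : n}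
    (hik : i ≠ k) (hil : i ≠ l) (hjk : j ≠ k) (hjl : j ≠ l) :
    (skewSingle i j * skewSingle k l : Matrix n n R) = 0 := by
  simp [skewSingle, sub_mul, mul_sub, single_mul_single_of_ne, hik, hil, hjk, hjl]

theorem commute_skewSingle_of_disjoint [Fintype n] {i j k l : n}
    (hik : i ≠ k) (hil : i ≠ l) (hjk : j ≠ k) (hjl : j ≠ l) :
    Commute (skewSingle i j : Matrix n n R) (skewSingle k l) :=
  (skewSingle_mul_skewSingle_of_disjoint hik hil hjk hjl).trans
    (skewSingle_mul_skewSingle_of_disjoint hik.symm hjk.symm hil.symm hjl.symm).symm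

end skewSingle

section bodyVelocity

variable {n K : Type*} [Field K]

/-- The angular velocity `Ω` of the body momentum `M` for the inertia `J = diag lam`, i.e. the
solution of `M = Ω J + J Ω` (when all `lam i + lam j ≠ 0`). -/
def bodyVelocity (lam : n → K) (M : Matrix n n K) : Matrix n n K :=
  of fun i j => M i j / (lam i + lam j)

theorem bodyVelocity_add (lam : n → K) (M N : Matrix n n K) :
    bodyVelocity lam (M + N) = bodyVelocity lam M + bodyVelocity lam N := by
  ext i j
  simp [bodyVelocity, add_div]

theorem bodyVelocity_smul (lam : n → K) (c : K) (M : Matrix n n K) :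
    bodyVelocity lam (c • M) = c • bodyVelocity lam M := by
  ext i j
  simp [bodyVelocity, mul_div_assoc]

theorem bodyVelocity_skewSingle [DecidableEq n] (lam : n → K) (i j : n) :
    bodyVelocity lam (skewSingle i j) = (lam i + lam j)⁻¹ • skewSingle i j := by
  ext k l
  simp only [bodyVelocity, of_apply, smul_apply, smul_eq_mul, div_eq_inv_mul]
  by_cases h : (k = i ∧ l = j) ∨ (k = j ∧ l = i)
  · rcases h with ⟨rfl, rfl⟩ | ⟨rfl, rfl⟩
    · rfl
    · rw [add_comm]
  · have hzero : (skewSingle i j : Matrix n n K) k l = 0 := by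
      simp only [skewSingle, sub_apply, single_apply]
      grind
    rw [hzero, mul_zero, mul_zero]

end bodyVelocity

end Matrix

theorem Commute.smul_add_smul {R A : Type*} [CommSemiring R] [Semiring A] [Algebra R A]
    {X Y : A} (h : Commute X Y) (a b c d : R) : Commute (a • X + b • Y) (c • X + d • Y) := by
  apply Commute.add_left <;> apply Commute.add_right <;> apply Commute.smul_left <;>
    apply Commute.smul_right
  exacts [Commute.refl X, h, h.symm, Commute.refl Y]

theorem stmt11_general (lam : Fin 5 → ℝ)
    (a b : ℝ)
    (M : Matrix (Fin 5) (Fin 5) ℝ)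
    (hM : M = !![0, a, 0, 0, 0;
                 -a, 0, 0, 0, 0;
                 0, 0, 0, b, 0;
                 0, 0, -b, 0, 0;
                 0, 0, 0, 0, 0])
    (Ω : Matrix (Fin 5) (Fin 5) ℝ)
    (hΩ : Ω = Matrix.of fun i j => M i j / (lam i + lam j)) :
    M * Ω - Ω * M = 0 := by
  have hM' : M = a • skewSingle 0 1 + b • skewSingle 2 3 := by
    subst hM
    ext i j
    fin_cases i <;> fin_cases j <;> simp [skewSingle]
  have hΩ' : Ω = (a * (lam 0 + lam 1)⁻¹) • skewSingle 0 1
      + (b * (lam 2 + lam 3)⁻¹) • skewSingle 2 3 := by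
    rw [hΩ, ← bodyVelocity, hM', bodyVelocity_add, bodyVelocity_smul, bodyVelocity_smul,
      bodyVelocity_skewSingle, bodyVelocity_skewSingle, smul_smul, smul_smul]
  have hXY : Commute (skewSingle 0 1 : Matrix (Fin 5) (Fin 5) ℝ) (skewSingle 2 3) :=
    commute_skewSingle_of_disjoint (by decide) (by decide) (by decide) (by decide)
  rw [sub_eq_zero, hM', hΩ']
  exact (hXY.smul_add_smul _ _ _ _).eq

/-- The matrix `M(a,b) ∈ so(5)` with nonzero entries `M₁₂ = a = −M₂₁`, `M₃₄ = b = −M₄₃` is an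
equilibrium of the `so(5)` free rigid body: `[M(a,b), Ω] = 0`. -/
theorem stmt11 (lam : Fin 5 → ℝ)
    (hpos : ∀ i j : Fin 5, i ≠ j → 0 < lam i + lam j)
    (a b : ℝ)
    (M : Matrix (Fin 5) (Fin 5) ℝ)
    (hM : M = !![0, a, 0, 0, 0;
                 -a, 0, 0, 0, 0;
                 0, 0, 0, b, 0;
                 0, 0, -b, 0, 0;
                 0, 0, 0, 0, 0])
    (Ω : Matrix (Fin 5) (Fin 5) ℝ)
    (hΩ : Ω = Matrix.of fun i j => M i j / (lam i + lam j)) :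
    M * Ω - Ω * M = 0 :=
  stmt11_general lam a b M hM Ω hΩ
end
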